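/- There is a constant C > 0 such that for all sufficiently large n there exists a 3-edge-colouring of K_n with colours {1,2,3} that contains no rainbow triangle and in which every homogeneous set has size at most C·n^{1/3}·(log n)^2. -/

import Mathlib

/-!
Take `m = ⌈n^{1/3}⌉` and embed `Fin n` into `[m]³`. By Erdős's counting argument there is a
2-colouring of the pairs of `[m]` without monochromatic sets of size `2⌈log₂ m⌉ + 2`. Use it on
the `k`-th coordinate with the palette `{k, k + 1} ⊆ ℤ/3`, and colour a pair of triples according
to the first coordinate where they differ. In a triangle, at the first coordinate where its
vertices are not all equal, two of its edges get the same colour, so no triangle is rainbow.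
In such a lexicographic product, a set missing colour `i` has size at most the product over the
coordinates of the largest sets missing `i` there: `m` for the coordinate whose palette avoids
`i`, and the Ramsey bound `2⌈log₂ m⌉ + 1` for the other two.
-/

open Finset

/-- A set `X` is homogeneous for a 3-edge-colouring `c` of `K_n`
if some colour does not appear on pairs of distinct elements of `X`. -/
def IsHomog {n : ℕ} (c : Sym2 (Fin n) → Fin 3) (X : Finset (Fin n)) : Prop :=
  ∃ i : Fin 3, ∀ x ∈ X, ∀ y ∈ X, x ≠ y → c s(x, y) ≠ i

/-- `c` contains a rainbow triangle: three vertices whose three pairs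
receive three pairwise distinct colours. -/
def HasRainbowTriangle {n : ℕ} (c : Sym2 (Fin n) → Fin 3) : Prop :=
  ∃ x y z : Fin n, x ≠ y ∧ y ≠ z ∧ x ≠ z ∧
    c s(x, y) ≠ c s(y, z) ∧ c s(y, z) ≠ c s(x, z) ∧ c s(x, y) ≠ c s(x, z)

variable {α β κ κ' : Type*}

def MissesColour (c : Sym2 α → κ) (i : κ) (X : Finset α) : Prop :=
  ∀ x ∈ X, ∀ y ∈ X, x ≠ y → c s(x, y) ≠ i

instance [DecidableEq α] [DecidableEq κ] (c : Sym2 α → κ) (i : κ) (X : Finset α) :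
    Decidable (MissesColour c i X) := by
  unfold MissesColour
  infer_instance

lemma MissesColour.mono {c : Sym2 α → κ} {i : κ} {X Y : Finset α} (h : MissesColour c i X)
    (hYX : Y ⊆ X) : MissesColour c i Y :=
  fun x hx y hy hxy => h x (hYX hx) y (hYX hy) hxy

lemma MissesColour.map {c : Sym2 α → κ} {i : κ} {X : Finset β} (f : β ↪ α)
    (h : MissesColour (c ∘ Sym2.map f) i X) : MissesColour c i (X.map f) := by
  simp only [MissesColour, mem_map]
  rintro _ ⟨x, hx, rfl⟩ _ ⟨y, hy, rfl⟩ hxy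
  exact h x hx y hy (ne_of_apply_ne f hxy)

section Erdos

variable [Fintype α] [DecidableEq α]

lemma card_filter_forall_ne_mul_two_pow (T : Finset α) (b : Fin 2) :
    #{f : α → Fin 2 | ∀ a ∈ T, f a ≠ b} * 2 ^ #T = 2 ^ Fintype.card α := by
  have hpi : ({f : α → Fin 2 | ∀ a ∈ T, f a ≠ b} : Finset _) =
      Fintype.piFinset fun a => if a ∈ T then {b}ᶜ else univ := by
    ext f
    simp only [mem_filter, mem_univ, true_and, Fintype.mem_piFinset]
    exact forall_congr' fun a => by split_ifs <;> simp [*]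
  have hcard (a : α) : #(if a ∈ T then {b}ᶜ else univ) = if a ∈ Tᶜ then 2 else 1 := by
    by_cases h : a ∈ T <;> simp [h, card_compl]
  simp only [hpi, Fintype.card_piFinset, hcard, prod_ite_mem, univ_inter, prod_const, ← pow_add,
    card_compl_add_card]

lemma card_missesColour_mul_two_pow (S : Finset α) (j : Fin 2) :
    #{d : Sym2 α → Fin 2 | MissesColour d j S} * 2 ^ (#S).choose 2 =
      2 ^ Fintype.card (Sym2 α) := by
  have h (d : Sym2 α → Fin 2) :
      MissesColour d j S ↔ ∀ e ∈ S.offDiag.image Sym2.mk.uncurry, d e ≠ j := by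
    refine ⟨fun hd e he => ?_, fun hd x hx y hy hxy => ?_⟩
    · obtain ⟨⟨x, y⟩, hxy, rfl⟩ := mem_image.1 he
      rw [mem_offDiag] at hxy
      exact hd x hxy.1 y hxy.2.1 hxy.2.2
    · exact hd _ (mem_image_of_mem _ (mem_offDiag.2 ⟨hx, hy, hxy⟩))
  simp_rw [h, ← Sym2.card_image_offDiag]
  exact card_filter_forall_ne_mul_two_pow _ j

theorem exists_fin_two_colouring_missesColour_card_lt {k : ℕ}
    (hk : (Fintype.card α).choose k * 2 < 2 ^ k.choose 2) :
    ∃ d : Sym2 α → Fin 2, ∀ j X, MissesColour d j X → #X < k := by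
  set bad : Finset (Sym2 α → Fin 2) :=
    (powersetCard k univ ×ˢ univ).biUnion fun Sj => {d | MissesColour d Sj.2 Sj.1}
  have hbad : #bad * 2 ^ k.choose 2 < 2 ^ Fintype.card (Sym2 α) * 2 ^ k.choose 2 :=
    calc #bad * 2 ^ k.choose 2
        ≤ ∑ Sj ∈ powersetCard k univ ×ˢ univ,
            #{d : Sym2 α → Fin 2 | MissesColour d Sj.2 Sj.1} * 2 ^ k.choose 2 := by
          rw [← sum_mul]
          exact Nat.mul_le_mul_right _ card_biUnion_le
      _ = ∑ _Sj ∈ powersetCard k univ ×ˢ (univ : Finset (Fin 2)),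
            2 ^ Fintype.card (Sym2 α) := by
          refine sum_congr rfl fun Sj hSj => ?_
          rw [← (mem_powersetCard.1 (mem_product.1 hSj).1).2]
          exact card_missesColour_mul_two_pow Sj.1 Sj.2
      _ = (Fintype.card α).choose k * 2 * 2 ^ Fintype.card (Sym2 α) := by simp
      _ < 2 ^ k.choose 2 * 2 ^ Fintype.card (Sym2 α) := by gcongr
      _ = 2 ^ Fintype.card (Sym2 α) * 2 ^ k.choose 2 := mul_comm _ _
  obtain ⟨d, -, hd⟩ := exists_mem_notMem_of_card_lt_card (s := bad) (t := univ)
    (by simpa using lt_of_mul_lt_mul_right' hbad)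
  refine ⟨d, fun j X hX => ?_⟩
  by_contra! hkX
  obtain ⟨S, hSX, hS⟩ := exists_subset_card_eq hkX
  exact hd (mem_biUnion.2 ⟨(S, j), by simp [hS], by simpa using hX.mono hSX⟩)

lemma choose_mul_two_lt_two_pow_choose {m : ℕ} (hm : 2 ≤ m) :
    m.choose (2 * Nat.clog 2 m + 2) * 2 < 2 ^ (2 * Nat.clog 2 m + 2).choose 2 := by
  set L := Nat.clog 2 m
  have hL : 0 < L := Nat.clog_pos one_lt_two hm
  have hchoose : (2 * L + 2).choose 2 = (L + 1) * (2 * L + 1) := by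
    rw [Nat.choose_two_right, show 2 * L + 2 - 1 = 2 * L + 1 by omega]
    exact Nat.div_eq_of_eq_mul_left two_pos (by ring)
  calc m.choose (2 * L + 2) * 2 ≤ (2 ^ L) ^ (2 * L + 2) * 2 := by
        gcongr
        exact (m.choose_le_pow _).trans (Nat.pow_le_pow_left (Nat.le_pow_clog one_lt_two m) _)
    _ = 2 ^ (L * (2 * L + 2) + 1) := by rw [← pow_mul, pow_succ]
    _ < 2 ^ (2 * L + 2).choose 2 := Nat.pow_lt_pow_right one_lt_two (by rw [hchoose]; nlinarith)

theorem exists_fin_two_colouring_missesColour_card_le (hα : 2 ≤ Fintype.card α) :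
    ∃ d : Sym2 α → Fin 2, ∀ j X, MissesColour d j X → #X ≤ 2 * Nat.clog 2 (Fintype.card α) + 1 :=
  (exists_fin_two_colouring_missesColour_card_lt (choose_mul_two_lt_two_pow_choose hα)).imp
    fun _ hd j X hX => Nat.lt_succ_iff.1 (hd j X hX)

end Erdos

def IsGallaiColouring (c : Sym2 α → κ) : Prop :=
  ∀ x y z, c s(x, y) = c s(y, z) ∨ c s(y, z) = c s(x, z) ∨ c s(x, y) = c s(x, z)

lemma isGallaiColouring_of_fin_two (d : Sym2 α → Fin 2) : IsGallaiColouring d := by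
  intro x y z
  generalize d s(x, y) = a, d s(y, z) = b, d s(x, z) = c
  revert a b c
  decide

lemma IsGallaiColouring.comp {c : Sym2 α → κ} (h : IsGallaiColouring c) (f : κ → κ') :
    IsGallaiColouring (f ∘ c) := fun x y z => by
  rcases h x y z with h | h | h <;> simp [h]

lemma IsGallaiColouring.comap {c : Sym2 α → κ} (h : IsGallaiColouring c) (f : β → α) :
    IsGallaiColouring (c ∘ Sym2.map f) := fun x y z => by
  simpa using h (f x) (f y) (f z)

lemma IsGallaiColouring.not_hasRainbowTriangle {n : ℕ} {c : Sym2 (Fin n) → Fin 3}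
    (h : IsGallaiColouring c) : ¬ HasRainbowTriangle c := by
  rintro ⟨x, y, z, -, -, -, hxy, hyz, hxz⟩
  rcases h x y z with h | h | h <;> contradiction

section Lex

variable [DecidableEq α]

def lexColouring (c : Sym2 α → κ) (d : Sym2 β → κ) : Sym2 (α × β) → κ :=
  Sym2.lift ⟨fun p q => if p.1 = q.1 then d s(p.2, q.2) else c s(p.1, q.1), fun p q => by
    by_cases h : p.1 = q.1 <;> simp [h, eq_comm, Sym2.eq_swap]⟩

@[simp]
lemma lexColouring_mk (c : Sym2 α → κ) (d : Sym2 β → κ) (p q : α × β) :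
    lexColouring c d s(p, q) = if p.1 = q.1 then d s(p.2, q.2) else c s(p.1, q.1) :=
  rfl

lemma IsGallaiColouring.lexColouring {c : Sym2 α → κ} {d : Sym2 β → κ}
    (hc : IsGallaiColouring c) (hd : IsGallaiColouring d) :
    IsGallaiColouring (lexColouring c d) := by
  rintro ⟨a, x⟩ ⟨b, y⟩ ⟨e, z⟩
  have hcabe := hc a b e
  have hdxyz := hd x y z
  simp only [lexColouring_mk]
  by_cases hab : a = b <;> by_cases hbe : b = e <;> by_cases hae : a = e <;>
    subst_vars <;> simp_all [Sym2.eq_swap]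

lemma card_le_mul_of_missesColour_lexColouring {c : Sym2 α → κ} {d : Sym2 β → κ} {i : κ}
    {A B : ℕ} (hc : ∀ Y, MissesColour c i Y → #Y ≤ A) (hd : ∀ Z, MissesColour d i Z → #Z ≤ B)
    {X : Finset (α × β)} (hX : MissesColour (lexColouring c d) i X) : #X ≤ A * B := by
  classical
  have hfst : MissesColour c i (X.image Prod.fst) := by
    simp only [MissesColour, mem_image]
    rintro _ ⟨p, hp, rfl⟩ _ ⟨q, hq, rfl⟩ hpq
    simpa [hpq] using hX p hp q hq (ne_of_apply_ne Prod.fst hpq)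
  have hfibre (a : α) : #{p ∈ X | p.1 = a} ≤ B := by
    have hinj : Set.InjOn Prod.snd (↑({p ∈ X | p.1 = a} : Finset (α × β)) : Set (α × β)) := by
      intro p hp q hq h
      simp only [mem_coe, mem_filter] at hp hq
      exact Prod.ext (hp.2.trans hq.2.symm) h
    rw [← card_image_of_injOn hinj]
    apply hd
    simp only [MissesColour, mem_image, mem_filter]
    rintro _ ⟨p, ⟨hp, rfl⟩, rfl⟩ _ ⟨q, ⟨hq, hpq⟩, rfl⟩ hne
    simpa [hpq] using hX p hp q hq (ne_of_apply_ne Prod.snd hne)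
  calc #X ≤ B * #(X.image Prod.fst) := card_le_mul_card_image X B fun a _ => hfibre a
    _ ≤ A * B := by rw [mul_comm]; exact Nat.mul_le_mul_right B (hc _ hfst)

end Lex

def shiftColouring (k : Fin 3) (d : Sym2 α → Fin 2) : Sym2 α → Fin 3 :=
  fun e => k + (d e).castSucc

lemma isGallaiColouring_shiftColouring (k : Fin 3) (d : Sym2 α → Fin 2) :
    IsGallaiColouring (shiftColouring k d) :=
  (isGallaiColouring_of_fin_two d).comp fun j => k + j.castSucc

lemma card_le_of_missesColour_shiftColouring {d : Sym2 α → Fin 2} {B : ℕ}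
    (hd : ∀ j X, MissesColour d j X → #X ≤ B) {k i : Fin 3} (hik : i ≠ k + 2) {X : Finset α}
    (hX : MissesColour (shiftColouring k d) i X) : #X ≤ B := by
  have hpalette : ∀ i k : Fin 3, i ≠ k + 2 → ∃ j : Fin 2, k + j.castSucc = i := by decide
  obtain ⟨j, rfl⟩ := hpalette i k hik
  exact hd j X fun x hx y hy hxy h => hX x hx y hy hxy (by simp [shiftColouring, h])

theorem exists_isGallaiColouring_missesColour_card_le {n m : ℕ} (hm : 2 ≤ m) (hnm : n ≤ m ^ 3) :
    ∃ c : Sym2 (Fin n) → Fin 3, IsGallaiColouring c ∧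
      ∀ i X, MissesColour c i X → #X ≤ m * (2 * Nat.clog 2 m + 1) ^ 2 := by
  obtain ⟨d, hd⟩ := exists_fin_two_colouring_missesColour_card_le (α := Fin m) (by simpa)
  rw [Fintype.card_fin] at hd
  set B := 2 * Nat.clog 2 m + 1
  obtain ⟨P⟩ : Nonempty (Fin n ↪ (Fin m × Fin m) × Fin m) :=
    Function.Embedding.nonempty_of_card_le (by simpa [pow_three, mul_assoc] using hnm)
  have hgallai (k : Fin 3) := isGallaiColouring_shiftColouring k d
  refine ⟨lexColouring (lexColouring (shiftColouring 0 d) (shiftColouring 1 d))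
      (shiftColouring 2 d) ∘ Sym2.map P,
    (((hgallai 0).lexColouring (hgallai 1)).lexColouring (hgallai 2)).comap P,
    fun i X hX => ?_⟩
  -- the palette `{k, k + 1}` of coordinate `k` avoids `i` exactly when `i = k + 2`
  have hlevel (k : Fin 3) (Y : Finset (Fin m)) (hY : MissesColour (shiftColouring k d) i Y) :
      #Y ≤ if i = k + 2 then m else B := by
    split_ifs with h
    · simpa using card_le_univ Y
    · exact card_le_of_missesColour_shiftColouring hd h hY
  rw [← card_map P]
  refine (card_le_mul_of_missesColour_lexColouring
    (fun _ hY => card_le_mul_of_missesColour_lexColouring (hlevel 0) (hlevel 1) hY)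
    (hlevel 2) (hX.map P)).trans (le_of_eq ?_)
  fin_cases i <;> simp [sq, mul_comm, mul_left_comm]

lemma clog_two_lt_logb_add_one {m : ℕ} (hm : 1 ≤ m) :
    (Nat.clog 2 m : ℝ) < Real.logb 2 m + 1 := by
  have h := Nat.ceil_lt_add_one (Real.logb_nonneg one_lt_two (Nat.one_le_cast.2 hm))
  rwa [show (2 : ℝ) = ((2 : ℕ) : ℝ) by norm_num, Real.natCeil_logb_natCast] at h

lemma exists_le_cube_le_two_mul_rpow {n : ℕ} (hn : 2 ≤ n) :
    ∃ m : ℕ, 2 ≤ m ∧ n ≤ m ^ 3 ∧ (m : ℝ) ≤ 2 * (n : ℝ) ^ ((1 : ℝ) / 3) := by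
  set t := (n : ℝ) ^ ((1 : ℝ) / 3)
  have ht : 1 < t := Real.one_lt_rpow (by exact_mod_cast hn) (by norm_num)
  have htn : t ^ 3 = n := by
    rw [← Real.rpow_natCast, ← Real.rpow_mul (Nat.cast_nonneg n)]
    norm_num
  refine ⟨⌈t⌉₊, Nat.lt_ceil.2 (by exact_mod_cast ht), ?_, ?_⟩
  · exact_mod_cast htn ▸ pow_le_pow_left₀ (by positivity) (Nat.le_ceil t) 3
  · linarith [Nat.ceil_lt_add_one (zero_le_one.trans ht.le)]

lemma two_mul_clog_add_one_le_six_mul_logb {n m : ℕ} (hn : 2 ≤ n) (hm : 1 ≤ m)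
    (hmn : (m : ℝ) ≤ 2 * (n : ℝ) ^ ((1 : ℝ) / 3)) :
    ((2 * Nat.clog 2 m + 1 : ℕ) : ℝ) ≤ 6 * Real.logb 2 n := by
  have hlogm : Real.logb 2 m ≤ 1 + Real.logb 2 n / 3 := by
    calc Real.logb 2 m ≤ Real.logb 2 (2 * (n : ℝ) ^ ((1 : ℝ) / 3)) :=
          Real.logb_le_logb_of_le one_lt_two (by exact_mod_cast hm) hmn
      _ = 1 + Real.logb 2 n / 3 := by
          rw [Real.logb_mul two_ne_zero (by positivity), Real.logb_self_eq_one one_lt_two,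
            Real.logb_rpow_eq_mul_logb_of_pos (by positivity)]
          ring
  have hlogn : 1 ≤ Real.logb 2 n := by
    rw [← Real.logb_self_eq_one one_lt_two]
    exact Real.logb_le_logb_of_le one_lt_two two_pos (by exact_mod_cast hn)
  push_cast
  linarith [clog_two_lt_logb_add_one hm]

theorem stmt6 :
    ∃ C : ℝ, 0 < C ∧ ∃ N : ℕ, ∀ n : ℕ, N ≤ n →
      ∃ c : Sym2 (Fin n) → Fin 3, ¬ HasRainbowTriangle c ∧
        ∀ X : Finset (Fin n), IsHomog c X →
          (X.card : ℝ) ≤ C * (n : ℝ) ^ ((1 : ℝ) / 3) * (Real.logb 2 n) ^ 2 := by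
  refine ⟨72, by norm_num, 2, fun n hn => ?_⟩
  obtain ⟨m, hm, hnm, hmn⟩ := exists_le_cube_le_two_mul_rpow hn
  obtain ⟨c, hc, hcX⟩ := exists_isGallaiColouring_missesColour_card_le hm hnm
  refine ⟨c, hc.not_hasRainbowTriangle, fun X ⟨i, hX⟩ => ?_⟩
  have hB := two_mul_clog_add_one_le_six_mul_logb hn (one_le_two.trans hm) hmn
  calc (X.card : ℝ) ≤ m * ((2 * Nat.clog 2 m + 1 : ℕ) : ℝ) ^ 2 := by
        exact_mod_cast hcX i X hX
    _ ≤ (2 * (n : ℝ) ^ ((1 : ℝ) / 3)) * (6 * Real.logb 2 n) ^ 2 := by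
        gcongr
    _ = 72 * (n : ℝ) ^ ((1 : ℝ) / 3) * (Real.logb 2 n) ^ 2 := by ring
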